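/- Let N ≥ 2, let |GHZ_N⟩ = (|0⟩^{⊗N} + |1⟩^{⊗N})/√2 in (C²)^{⊗N}, and for 0 ≤ v ≤ 1 let ρ(v) = v|GHZ_N⟩⟨GHZ_N| + (1−v)·1/2^N. For each qubit x take the single observable σ_z^{(x)} (the Pauli-z matrix on qubit x, tensored with identities elsewhere), and let Γ be the covariance matrix of {σ_z^{(1)},…,σ_z^{(N)}} on ρ(v). Then Γ has all diagonal entries equal to 1 and all off-diagonal entries equal to v, so tr(Γ) = N and 2 Σ_{1 ≤ y < x ≤ N} ‖γ_{xy}‖_tr = N(N−1)v; consequently the inequality tr(Γ) ≥ 2 Σ_{1 ≤ y < x ≤ N} ‖γ_{xy}‖_tr holds if and only if v ≤ 1/(N−1). -/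

import Mathlib

open Matrix BigOperators
open scoped ComplexOrder

noncomputable section

/-- Covariance matrix of a family of observables `M` in the state `ρ`. -/
def covMat {n ι : Type*} [Fintype n] (M : ι → Matrix n n ℂ) (ρ : Matrix n n ℂ) :
    Matrix ι ι ℂ :=
  Matrix.of fun i j => (M i * M j * ρ).trace - (M i * ρ).trace * (M j * ρ).trace

/-- The former `Matrix.PosSemidef.sqrt` (removed from Mathlib), with its old definition. -/
def posSemidefSqrtOld {n : Type*} [Fintype n] [DecidableEq n] {A : Matrix n n ℂ}
    (hA : A.PosSemidef) : Matrix n n ℂ :=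
  (hA.1.eigenvectorUnitary : Matrix n n ℂ) *
    diagonal ((↑) ∘ (Real.sqrt ·) ∘ hA.1.eigenvalues) *
    (star hA.1.eigenvectorUnitary : Matrix n n ℂ)

/-- The trace norm `‖X‖_tr = tr √(X†X)` of a complex matrix. -/
def traceNorm {m n : Type*} [Fintype m] [Fintype n] [DecidableEq n]
    (X : Matrix m n ℂ) : ℝ :=
  (posSemidefSqrtOld (Matrix.posSemidef_conjTranspose_mul_self X)).trace.re

/-- The `N`-qubit GHZ state vector `(|0…0⟩ + |1…1⟩)/√2`. -/
def ghzNVec (N : ℕ) : (Fin N → Fin 2) → ℂ := fun f =>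
  if f = (fun _ => 0) ∨ f = (fun _ => 1) then ((Real.sqrt 2)⁻¹ : ℝ) else 0

/-- The noisy `N`-qubit GHZ state `v |GHZ_N⟩⟨GHZ_N| + (1−v)·1/2^N`. -/
def ghzNNoisy (N : ℕ) (v : ℝ) :
    Matrix (Fin N → Fin 2) (Fin N → Fin 2) ℂ :=
  (v : ℂ) • vecMulVec (ghzNVec N) (star (ghzNVec N)) +
    ((1 - v : ℝ) : ℂ) •
      (((2 : ℂ) ^ N)⁻¹ • (1 : Matrix (Fin N → Fin 2) (Fin N → Fin 2) ℂ))

/-- The Pauli-`z` observable on qubit `x`, tensored with identities elsewhere. -/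
def sigmaZat {N : ℕ} (x : Fin N) :
    Matrix (Fin N → Fin 2) (Fin N → Fin 2) ℂ :=
  Matrix.of fun f g => if f = g then (if f x = 0 then 1 else -1) else 0

namespace Stmt19Aux

variable {N : ℕ}

/-- The diagonal of `σ_z` at qubit `x`. -/
def dvec (x : Fin N) : (Fin N → Fin 2) → ℂ := fun f => if f x = 0 then 1 else -1

/-- The all-zero configuration. -/
def fa (N : ℕ) : Fin N → Fin 2 := fun _ => 0
/-- The all-one configuration. -/
def fb (N : ℕ) : Fin N → Fin 2 := fun _ => 1

lemma h01 (a : Fin 2) : a = 0 ∨ a = 1 := by omega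

lemma dvec_mul_self (x : Fin N) (f : Fin N → Fin 2) : dvec x f * dvec x f = 1 := by
  rcases h01 (f x) with h | h <;> simp [dvec, h]

lemma sum_flip_eq_zero (x : Fin N) (g : (Fin N → Fin 2) → ℂ)
    (hg : ∀ f, g (Function.update f x (f x + 1)) = - g f) :
    ∑ f : Fin N → Fin 2, g f = 0 := by
  have h2 : ∀ a : Fin 2, a + 1 + 1 = a := by decide
  have hinv : Function.Involutive
      (fun f : Fin N → Fin 2 => Function.update f x (f x + 1)) := by
    intro f
    simp only [Function.update_self, Function.update_idem, h2, Function.update_eq_self]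
  have h1 : ∑ f : Fin N → Fin 2, g f = - ∑ f : Fin N → Fin 2, g f := by
    calc ∑ f : Fin N → Fin 2, g f
        = ∑ f : Fin N → Fin 2, g (hinv.toPerm _ f) := (Equiv.sum_comp (hinv.toPerm _) g).symm
      _ = ∑ f : Fin N → Fin 2, - g f := by
          refine Finset.sum_congr rfl fun f _ => ?_
          simpa [Function.Involutive.coe_toPerm] using hg f
      _ = - ∑ f : Fin N → Fin 2, g f := by rw [Finset.sum_neg_distrib]
  linear_combination (1/2 : ℂ) * h1

lemma sum_dvec (x : Fin N) : ∑ f : Fin N → Fin 2, dvec x f = 0 := by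
  refine sum_flip_eq_zero x _ fun f => ?_
  rcases h01 (f x) with h | h <;> simp [dvec, h]

lemma sum_dvec_mul {x y : Fin N} (hxy : x ≠ y) :
    ∑ f : Fin N → Fin 2, dvec x f * dvec y f = 0 := by
  refine sum_flip_eq_zero x _ fun f => ?_
  have hy : dvec y (Function.update f x (f x + 1)) = dvec y f := by
    simp [dvec, Function.update_of_ne (Ne.symm hxy)]
  have hx : dvec x (Function.update f x (f x + 1)) = - dvec x f := by
    rcases h01 (f x) with h | h <;> simp [dvec, h]
  rw [hx, hy]; ring

lemma ghz_sq (f : Fin N → Fin 2) :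
    ghzNVec N f * (starRingEnd ℂ) (ghzNVec N f) =
      if f = fa N ∨ f = fb N then (1/2 : ℂ) else 0 := by
  unfold ghzNVec fa fb
  split
  · rw [Complex.conj_ofReal, ← Complex.ofReal_mul, ← mul_inv,
      Real.mul_self_sqrt (by norm_num)]
    norm_num
  · simp

lemma fa_ne_fb (hN : 2 ≤ N) : fa N ≠ fb N := by
  intro h
  have := congrFun h ⟨0, by omega⟩
  simp [fa, fb] at this

lemma sum_support (hN : 2 ≤ N) (F : (Fin N → Fin 2) → ℂ) :
    ∑ f : Fin N → Fin 2, F f * (ghzNVec N f * (starRingEnd ℂ) (ghzNVec N f)) =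
      (F (fa N) + F (fb N)) / 2 := by
  have hab := fa_ne_fb hN
  calc ∑ f : Fin N → Fin 2, F f * (ghzNVec N f * (starRingEnd ℂ) (ghzNVec N f))
      = ∑ f : Fin N → Fin 2,
          ((if f = fa N then F f * (1/2) else 0) + (if f = fb N then F f * (1/2) else 0)) := by
        refine Finset.sum_congr rfl fun f _ => ?_
        rw [ghz_sq]
        by_cases h1 : f = fa N
        · subst h1; simp [hab]
        · by_cases h2 : f = fb N
          · subst h2; simp [h1, Ne.symm hab]
          · simp [h1, h2]
    _ = (F (fa N) + F (fb N)) / 2 := by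
        rw [Finset.sum_add_distrib, Finset.sum_ite_eq', Finset.sum_ite_eq']
        simp; ring

lemma sigmaZat_eq (x : Fin N) : sigmaZat x = Matrix.diagonal (dvec x) := by
  ext f g
  by_cases h : f = g <;> simp [sigmaZat, dvec, Matrix.diagonal_apply, h]

lemma rho_diag (v : ℝ) (f : Fin N → Fin 2) :
    ghzNNoisy N v f f =
      (v : ℂ) * (ghzNVec N f * (starRingEnd ℂ) (ghzNVec N f)) +
        ((1 - v : ℝ) : ℂ) * ((2 : ℂ) ^ N)⁻¹ := by
  simp [ghzNNoisy, vecMulVec_apply, Matrix.one_apply]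

lemma trace_diag_mul (hN : 2 ≤ N) (v : ℝ) (d : (Fin N → Fin 2) → ℂ) :
    (Matrix.diagonal d * ghzNNoisy N v).trace =
      (v : ℂ) * ((d (fa N) + d (fb N)) / 2) +
        ((1 - v : ℝ) : ℂ) * ((2 : ℂ) ^ N)⁻¹ * ∑ f : Fin N → Fin 2, d f := by
  have h1 : (Matrix.diagonal d * ghzNNoisy N v).trace =
      ∑ f : Fin N → Fin 2, d f * ghzNNoisy N v f f := by
    simp [Matrix.trace, Matrix.diag, Matrix.diagonal_mul]
  rw [h1]
  have h2 : ∀ f : Fin N → Fin 2, d f * ghzNNoisy N v f f =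
      (v : ℂ) * (d f * (ghzNVec N f * (starRingEnd ℂ) (ghzNVec N f))) +
        ((1 - v : ℝ) : ℂ) * ((2 : ℂ) ^ N)⁻¹ * d f := by
    intro f; rw [rho_diag]; ring
  simp_rw [h2]
  rw [Finset.sum_add_distrib, ← Finset.mul_sum, ← Finset.mul_sum,
    sum_support hN]

lemma dvec_fa (x : Fin N) : dvec x (fa N) = 1 := by simp [dvec, fa]
lemma dvec_fb (x : Fin N) : dvec x (fb N) = -1 := by simp [dvec, fb]

lemma trace_mean (hN : 2 ≤ N) (v : ℝ) (x : Fin N) :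
    (sigmaZat x * ghzNNoisy N v).trace = 0 := by
  rw [sigmaZat_eq, trace_diag_mul hN, sum_dvec, dvec_fa, dvec_fb]
  ring

lemma trace_second (hN : 2 ≤ N) (v : ℝ) (x y : Fin N) :
    (sigmaZat x * sigmaZat y * ghzNNoisy N v).trace =
      if x = y then 1 else (v : ℂ) := by
  rw [sigmaZat_eq, sigmaZat_eq, Matrix.diagonal_mul_diagonal, trace_diag_mul hN]
  simp only [Pi.mul_apply, dvec_fa, dvec_fb]
  by_cases h : x = y
  · subst h
    have hs : ∑ f : Fin N → Fin 2, dvec x f * dvec x f = (2 : ℂ) ^ N := by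
      simp_rw [dvec_mul_self]
      simp [Finset.card_univ]
    rw [hs, if_pos rfl]
    have h2 : ((2 : ℂ) ^ N) ≠ 0 := by positivity
    field_simp
    push_cast; ring
  · rw [sum_dvec_mul h, if_neg h]
    ring

lemma covMat_entry (hN : 2 ≤ N) (v : ℝ) (x y : Fin N) :
    covMat (fun x : Fin N => sigmaZat x) (ghzNNoisy N v) x y =
      if x = y then 1 else (v : ℂ) := by
  simp only [covMat, Matrix.of_apply]
  rw [trace_mean hN, trace_second hN]
  ring

lemma traceNorm_const (v : ℝ) (hv : 0 ≤ v) :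
    traceNorm (Matrix.of fun (_ : Fin 1) (_ : Fin 1) => (v : ℂ)) = v := by
  set X : Matrix (Fin 1) (Fin 1) ℂ := Matrix.of fun _ _ => (v : ℂ) with hX
  have hd : Matrix.PosSemidef (Matrix.diagonal fun _ : Fin 1 => (v : ℂ)) := by
    refine Matrix.PosSemidef.diagonal fun i => ?_
    simpa using Complex.zero_le_real.mpr hv
  have hsq : (Matrix.diagonal fun _ : Fin 1 => (v : ℂ)) ^ 2 = Xᴴ * X := by
    ext i j
    fin_cases i <;> fin_cases j
    simp [pow_two, Matrix.diagonal_mul_diagonal, Matrix.mul_apply,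
      Matrix.conjTranspose_apply, X, Complex.conj_ofReal]
  have hA := Matrix.posSemidef_conjTranspose_mul_self X
  have hU : (star (hA.1.eigenvectorUnitary : Matrix (Fin 1) (Fin 1) ℂ)) *
      (hA.1.eigenvectorUnitary : Matrix (Fin 1) (Fin 1) ℂ) = 1 :=
    Unitary.star_mul_self_of_mem hA.1.eigenvectorUnitary.2
  have hev := hA.1.trace_eq_sum_eigenvalues
  have htrX : (Xᴴ * X).trace = ((v ^ 2 : ℝ) : ℂ) := by
    simp [Matrix.trace, Matrix.mul_apply, Matrix.conjTranspose_apply, X, Complex.conj_ofReal, pow_two]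
  rw [htrX, Fin.sum_univ_one] at hev
  have hev' : hA.1.eigenvalues 0 = v ^ 2 := by
    have := congrArg Complex.re hev.symm
    rw [Complex.ofReal_re] at this
    exact this
  rw [traceNorm, posSemidefSqrtOld, Matrix.trace_mul_comm, ← Matrix.mul_assoc]
  rw [hU, Matrix.one_mul, Matrix.trace_diagonal, Fin.sum_univ_one]
  simp only [Function.comp_apply, Complex.ofReal_re]
  rw [hev', Real.sqrt_sq hv]

end Stmt19Aux

/-- For the noisy `N`-qubit GHZ state and the observables
`σ_z^{(x)}`, the covariance matrix has unit diagonal and off-diagonal entries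
`v`; hence `tr Γ = N`, `2 Σ_{y<x} ‖γ_{xy}‖_tr = N(N−1)v`, and the trace norm
criterion `tr Γ ≥ 2 Σ_{y<x} ‖γ_{xy}‖_tr` holds iff `v ≤ 1/(N−1)`. -/
theorem stmt19 {N : ℕ} (hN : 2 ≤ N) (v : ℝ) (hv0 : 0 ≤ v) (hv1 : v ≤ 1)
    (Γ : Matrix (Fin N) (Fin N) ℂ)
    (hΓ : Γ = covMat (fun x : Fin N => sigmaZat x) (ghzNNoisy N v)) :
    (∀ x, Γ x x = 1) ∧
    (∀ x y, x ≠ y → Γ x y = (v : ℂ)) ∧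
    Γ.trace = (N : ℂ) ∧
    (2 * ∑ x : Fin N, ∑ y : Fin N,
        (if y < x
          then traceNorm (Matrix.of fun (_ : Fin 1) (_ : Fin 1) => Γ x y)
          else 0) =
      (N : ℝ) * ((N : ℝ) - 1) * v) ∧
    ((Γ.trace.re ≥ 2 * ∑ x : Fin N, ∑ y : Fin N,
        (if y < x
          then traceNorm (Matrix.of fun (_ : Fin 1) (_ : Fin 1) => Γ x y)
          else 0)) ↔ v ≤ 1 / ((N : ℝ) - 1)) := by
  have hNR : (2 : ℝ) ≤ (N : ℝ) := by exact_mod_cast hN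
  have hdiag : ∀ x, Γ x x = 1 := by
    intro x
    rw [hΓ, Stmt19Aux.covMat_entry hN, if_pos rfl]
  have hoff : ∀ x y, x ≠ y → Γ x y = (v : ℂ) := by
    intro x y h
    rw [hΓ, Stmt19Aux.covMat_entry hN, if_neg h]
  have htr : Γ.trace = (N : ℂ) := by
    unfold Matrix.trace Matrix.diag
    rw [Finset.sum_congr rfl fun x _ => hdiag x]
    simp
  -- the double sum
  have hterm : ∀ x y : Fin N,
      (if y < x
        then traceNorm (Matrix.of fun (_ : Fin 1) (_ : Fin 1) => Γ x y)
        else 0) = (if y < x then v else 0) := by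
    intro x y
    by_cases h : y < x
    · rw [if_pos h, if_pos h, hoff x y (ne_of_gt h), Stmt19Aux.traceNorm_const v hv0]
    · rw [if_neg h, if_neg h]
  have hinner : ∀ x : Fin N, ∑ y : Fin N, (if y < x then v else 0) = ((x : ℕ) : ℝ) * v := by
    intro x
    rw [← Finset.sum_filter, Finset.sum_const]
    have hfil : Finset.filter (fun y => y < x) Finset.univ = Finset.Iio x := by
      ext y; simp
    rw [hfil, Fin.card_Iio]
    simp [nsmul_eq_mul]
  have hgauss : (∑ x : Fin N, (x : ℕ)) * 2 = N * (N - 1) := by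
    rw [Fin.sum_univ_eq_sum_range (fun i => i) N]
    exact Finset.sum_range_id_mul_two N
  have hsum : 2 * ∑ x : Fin N, ∑ y : Fin N,
      (if y < x
        then traceNorm (Matrix.of fun (_ : Fin 1) (_ : Fin 1) => Γ x y)
        else 0) = (N : ℝ) * ((N : ℝ) - 1) * v := by
    simp_rw [hterm, hinner]
    rw [← Finset.sum_mul, ← mul_assoc]
    have hcast : (2 : ℝ) * ∑ x : Fin N, ((x : ℕ) : ℝ) = (N : ℝ) * ((N : ℝ) - 1) := by
      have h1 : ((∑ x : Fin N, (x : ℕ)) * 2 : ℕ) = (N * (N - 1) : ℕ) := hgauss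
      have h2 : ((∑ x : Fin N, (x : ℕ) : ℕ) : ℝ) = ∑ x : Fin N, ((x : ℕ) : ℝ) := by
        push_cast; rfl
      have h3 : (((∑ x : Fin N, (x : ℕ)) * 2 : ℕ) : ℝ) = ((N * (N - 1) : ℕ) : ℝ) := by
        exact_mod_cast congrArg (Nat.cast : ℕ → ℝ) h1
      rw [Nat.cast_mul, Nat.cast_mul, Nat.cast_sub (by omega : 1 ≤ N), h2] at h3
      push_cast at h3 ⊢
      linarith
    rw [hcast]
  refine ⟨hdiag, hoff, htr, hsum, ?_⟩
  rw [hsum, htr]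
  simp only [Complex.natCast_re]
  have hN1 : (0 : ℝ) < (N : ℝ) - 1 := by linarith
  constructor
  · intro h
    rw [le_div_iff₀ hN1]
    nlinarith
  · intro h
    rw [le_div_iff₀ hN1] at h
    nlinarith
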